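/- Let A be a clone over ℕ. If a ∈ A is finitary and f : ℕ → A is such that f i is finitary for every i, then a[f] is finitary. Consequently the set F(A) of finitary elements of A, with the restricted substitution operation and the same distinguished elements x_i (each x_i is finitary, having rank i), is itself a clone over ℕ, and F(A) is locally finitary. -/

import Mathlib

/-- A clone over the positive integers ℕ = {1,2,3,…}. -/
structure CloneN (A : Type*) where
  sub : A → (ℕ+ → A) → A
  x : ℕ+ → A
  sub_assoc : ∀ (a : A) (f g : ℕ+ → A), sub (sub a f) g = sub a (fun i => sub (f i) g)
  sub_x : ∀ a : A, sub a x = a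
  x_sub : ∀ (i : ℕ+) (f : ℕ+ → A), sub (x i) f = f i

/-- `a` has rank `n`: for `n ≥ 1` this means `a[⟪x_1,…,x_n⟫] = a` where
`⟪x_1,…,x_n⟫ = (x_1,…,x_{n-1},x_n,x_n,…)`; rank `0` means
`a[⟪x_1⟫] = a[⟪x_2⟫] = a`. -/
def CloneN.HasRank {A : Type*} (C : CloneN A) : ℕ → A → Prop
  | 0, a => C.sub a (fun _ => C.x 1) = a ∧ C.sub a (fun _ => C.x 2) = a
  | n + 1, a => C.sub a (fun i => C.x (min i ⟨n + 1, Nat.succ_pos n⟩)) = a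

/-- An element is finitary if it has some finite rank `n ≥ 0`. -/
def CloneN.Finitary {A : Type*} (C : CloneN A) (a : A) : Prop := ∃ n : ℕ, C.HasRank n a

/-- A clone is locally finitary if every element is finitary. -/
def CloneN.LocallyFinitary {A : Type*} (C : CloneN A) : Prop := ∀ a : A, C.Finitary a

namespace CloneN

variable {A : Type*} (C : CloneN A)

/-- The sequence `⟪x_1,…,x_n⟫ = (x_1,…,x_{n-1},x_n,x_n,…)`. -/
def truncVars (n : ℕ+) : ℕ+ → A := fun i => C.x (min i n)

variable {C}

theorem hasRank_succ_iff {n : ℕ} {a : A} :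
    C.HasRank (n + 1) a ↔ C.sub a (C.truncVars n.succPNat) = a :=
  Iff.rfl

theorem sub_eq_sub_min {a : A} {m : ℕ+} (hm : C.sub a (C.truncVars m) = a) (f : ℕ+ → A) :
    C.sub a f = C.sub a (fun i => f (min i m)) := by
  conv_lhs => rw [← hm, C.sub_assoc]
  simp only [truncVars, C.x_sub]

theorem sub_truncVars_of_le {a : A} {m n : ℕ+} (hm : C.sub a (C.truncVars m) = a)
    (hmn : m ≤ n) : C.sub a (C.truncVars n) = a := by
  have hmin : ∀ i, min (min i m) n = min i m := fun i =>
    min_eq_left ((min_le_right i m).trans hmn)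
  rw [sub_eq_sub_min hm]
  simp only [truncVars, hmin]
  exact hm

theorem finitary_iff_exists_sub_truncVars {a : A} :
    C.Finitary a ↔ ∃ n : ℕ+, C.sub a (C.truncVars n) = a := by
  constructor
  · rintro ⟨_ | n, hn⟩
    · have h1 : C.truncVars 1 = fun _ => C.x 1 :=
        funext fun _ => congrArg C.x (min_eq_right one_le)
      exact ⟨1, h1 ▸ hn.1⟩
    · exact ⟨n.succPNat, hn⟩
  · rintro ⟨n, hn⟩
    exact ⟨n.natPred + 1, hasRank_succ_iff.mpr (by rwa [PNat.succPNat_natPred])⟩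

theorem finitary_sub {a : A} {f : ℕ+ → A} (ha : C.Finitary a) (hf : ∀ i, C.Finitary (f i)) :
    C.Finitary (C.sub a f) := by
  obtain ⟨m, hm⟩ := finitary_iff_exists_sub_truncVars.mp ha
  choose r hr using fun i => finitary_iff_exists_sub_truncVars.mp (hf i)
  -- `a` only reads `f 1, …, f m`, so the largest of their ranks bounds the rank of `a[f]`.
  set N := (Finset.Iic m).sup r
  have hfN : ∀ i, C.sub (f (min i m)) (C.truncVars N) = f (min i m) := fun i =>
    sub_truncVars_of_le (hr _) (Finset.le_sup (Finset.mem_Iic.mpr (min_le_right i m)))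
  refine finitary_iff_exists_sub_truncVars.mpr ⟨N, ?_⟩
  calc C.sub (C.sub a f) (C.truncVars N)
      = C.sub a (fun i => C.sub (f (min i m)) (C.truncVars N)) := by
        rw [C.sub_assoc, sub_eq_sub_min hm]
    _ = C.sub a f := by simp only [hfN, ← sub_eq_sub_min hm]

theorem hasRank_x (i : ℕ+) : C.HasRank i (C.x i) := by
  obtain ⟨n, rfl⟩ : ∃ n : ℕ, i = n.succPNat := ⟨i.natPred, i.succPNat_natPred.symm⟩
  exact hasRank_succ_iff.mpr (by rw [C.x_sub, truncVars, min_self])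

variable (C)

def finitarySubclone : CloneN {a : A // C.Finitary a} where
  sub a f := ⟨C.sub a (fun i => f i), finitary_sub a.2 fun i => (f i).2⟩
  x i := ⟨C.x i, i, hasRank_x i⟩
  sub_assoc a _ _ := Subtype.ext (C.sub_assoc a _ _)
  sub_x a := Subtype.ext (C.sub_x a)
  x_sub i _ := Subtype.ext (C.x_sub i _)

variable {C}

theorem hasRank_finitarySubclone_iff {n : ℕ} {a : {a : A // C.Finitary a}} :
    C.finitarySubclone.HasRank n a ↔ C.HasRank n a := by
  cases n <;> simp only [HasRank, Subtype.ext_iff] <;> rfl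

theorem locallyFinitary_finitarySubclone : C.finitarySubclone.LocallyFinitary := fun a =>
  let ⟨n, hn⟩ := a.2
  ⟨n, hasRank_finitarySubclone_iff.mpr hn⟩

end CloneN

/-- If `a` is finitary and all `f i` are finitary then `a[f]` is finitary; each `x_i`
is finitary of rank `i`; consequently the set `F(A)` of finitary elements, with the
restricted substitution and the same distinguished elements, is a clone over ℕ and is
locally finitary. -/
theorem finitary_elements_form_locally_finitary_clone {A : Type*} (C : CloneN A) :
    (∀ (a : A) (f : ℕ+ → A),
      C.Finitary a → (∀ i, C.Finitary (f i)) → C.Finitary (C.sub a f)) ∧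
    (∀ i : ℕ+, C.HasRank i (C.x i)) ∧
    (∃ C' : CloneN {a : A // C.Finitary a},
      (∀ i : ℕ+, (C'.x i : A) = C.x i) ∧
      (∀ (a : {a : A // C.Finitary a}) (f : ℕ+ → {a : A // C.Finitary a}),
        ((C'.sub a f : A)) = C.sub (a : A) (fun i => (f i : A))) ∧
      C'.LocallyFinitary) :=
  ⟨fun _ _ ha hf => CloneN.finitary_sub ha hf, CloneN.hasRank_x,
    C.finitarySubclone, fun _ => rfl, fun _ _ => rfl, CloneN.locallyFinitary_finitarySubclone⟩
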